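/- arXiv:1509.07349 — 2 statements merged into one kernel-verified Lean document; each statement's English description precedes it below -/
import Mathlib

section
/- The nonatomic charging game with f continuous and strictly increasing has a unique Nash equilibrium charging configuration: the Nash equilibria coincide with maximizers of the strictly concave potential Φ(x) = -Σ_t ∫_0^{x_t} f(L_t^exo + Pv)dv over the convex feasible set, and this maximizer is unique. -/
/-!
Write `g_t v = f (Lexo t + P * v)`, so that `Phi x = -∑_t ∫_0^{x_t} g_t`. Each `g_t` is strictly
increasing, hence `Phi` lies strictly below its tangent planes, whose slopes are `-g_t (x_t)`.
Exchanging the order of summation, pairing these slopes with the load of a profile `y'` gives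
`-∑_k w_k ∑_s y'_{k,s} cost_k(s)`. At a Wardrop profile every class uses only its cheapest start
times, so this pairing is largest there, and the tangent-plane inequality makes the profile a
maximizer of `Phi`, strictly better than any profile with a different load. Conversely, at a
maximizer the derivative of `Phi` along a transfer of class-`k` mass from a used start time `s`
to `s'` is `w_k (cost_k(s) - cost_k(s'))`, which must be `≤ 0`. A maximizer exists because the
feasible set is compact.
-/

namespace Stmt9

variable (T K : ℕ) (w : Fin K → ℝ) (a d : Fin K → ℤ) (C : Fin K → ℕ)
  (Lexo : ℤ → ℝ) (P : ℝ) (f : ℝ → ℝ)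

/-- Start-time set of class `k`. -/
noncomputable def S (k : Fin K) : Finset ℤ := Finset.Icc (a k) (d k - (C k : ℤ))

/-- Induced charging configuration `x_t = Σ_k w_k Σ_{t'=1}^{C_k} y_{k,(t-C_k+t')}`. -/
noncomputable def config (y : Fin K → ℤ → ℝ) (t : ℤ) : ℝ :=
  ∑ k : Fin K, w k * ∑ t' ∈ Finset.Icc (1 : ℤ) (C k : ℤ), y k (t - (C k : ℤ) + t')

/-- A feasible strategy profile: each class spreads its unit mass over its start times. -/
def Feasible (y : Fin K → ℤ → ℝ) : Prop :=
  (∀ k t, 0 ≤ y k t) ∧ (∀ k t, t ∉ S K a d C k → y k t = 0) ∧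
  (∀ k, ∑ t ∈ S K a d C k, y k t = 1)

/-- Cost of class `k` for start time `s` given configuration `x`. -/
noncomputable def cost (x : ℤ → ℝ) (k : Fin K) (s : ℤ) : ℝ :=
  ∑ t ∈ Finset.Icc s (s + (C k : ℤ) - 1), f (Lexo t + P * x t)

/-- Wardrop (Nash) equilibrium: every start time used with positive weight by a class
minimizes that class' cost. -/
noncomputable def IsWardrop (y : Fin K → ℤ → ℝ) : Prop :=
  ∀ k : Fin K, ∀ s ∈ S K a d C k, 0 < y k s →
    ∀ s' ∈ S K a d C k,
      cost K C Lexo P f (config K w C y) k s ≤ cost K C Lexo P f (config K w C y) k s'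

/-- Nonatomic potential. -/
noncomputable def Phi (x : ℤ → ℝ) : ℝ :=
  -∑ t ∈ Finset.Icc (1 : ℤ) (T : ℤ), ∫ v in (0 : ℝ)..(x t), f (Lexo t + P * v)

open Finset

lemma mul_sub_lt_integral_of_strictMono {g : ℝ → ℝ} (hgc : Continuous g) (hgm : StrictMono g)
    {u u' : ℝ} (hne : u ≠ u') : g u * (u' - u) < ∫ v in u..u', g v := by
  rcases hne.lt_or_gt with h | h
  · have := intervalIntegral.integral_lt_integral_of_continuousOn_of_le_of_exists_lt h
      continuousOn_const hgc.continuousOn (fun v hv => hgm.monotone hv.1.le)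
      ⟨u', Set.right_mem_Icc.2 h.le, hgm h⟩
    simpa [mul_comm] using this
  · have := intervalIntegral.integral_lt_integral_of_continuousOn_of_le_of_exists_lt h
      hgc.continuousOn continuousOn_const (fun v hv => hgm.monotone hv.2)
      ⟨u', Set.left_mem_Icc.2 h.le, hgm h⟩
    rw [intervalIntegral.integral_symm]
    simp only [intervalIntegral.integral_const, smul_eq_mul] at this
    linarith

lemma mul_sub_le_integral_of_strictMono {g : ℝ → ℝ} (hgc : Continuous g) (hgm : StrictMono g)
    (u u' : ℝ) : g u * (u' - u) ≤ ∫ v in u..u', g v := by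
  rcases eq_or_ne u u' with rfl | hne
  · simp
  · exact (mul_sub_lt_integral_of_strictMono hgc hgm hne).le

lemma sum_Icc_shift_eq_sum_inter_Icc {S : Finset ℤ} {m : ℤ} (h : ℤ → ℝ) (hh : ∀ s ∉ S, h s = 0)
    (t : ℤ) :
    ∑ t' ∈ Icc 1 m, h (t - m + t') = ∑ s ∈ S ∩ Icc (t - m + 1) t, h s := by
  have hmap : Icc (t - m + 1) t = (Icc 1 m).map (addLeftEmbedding (t - m)) := by
    rw [map_add_left_Icc, sub_add_cancel]
  rw [sum_subset inter_subset_right fun s hs hns => hh s fun hS => hns (mem_inter.2 ⟨hS, hs⟩),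
    hmap, sum_map]
  rfl

lemma sum_mul_sum_window {S I : Finset ℤ} {m : ℤ} (c h : ℤ → ℝ) (hh : ∀ s ∉ S, h s = 0)
    (hI : ∀ s ∈ S, Icc s (s + m - 1) ⊆ I) :
    ∑ t ∈ I, c t * ∑ t' ∈ Icc 1 m, h (t - m + t') =
      ∑ s ∈ S, h s * ∑ t ∈ Icc s (s + m - 1), c t := by
  simp_rw [sum_Icc_shift_eq_sum_inter_Icc h hh, mul_sum]
  refine (sum_comm' fun s t => ?_).symm.trans
    (sum_congr rfl fun t _ => sum_congr rfl fun s _ => mul_comm _ _)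
  constructor
  · rintro ⟨hs, ht⟩
    have := mem_Icc.1 ht
    exact ⟨mem_inter.2 ⟨hs, mem_Icc.2 (by omega)⟩, hI s hs ht⟩
  · rintro ⟨hs, -⟩
    obtain ⟨hs, hst⟩ := mem_inter.1 hs
    have := mem_Icc.1 hst
    exact ⟨hs, mem_Icc.2 (by omega)⟩

lemma sum_mul_le_sum_mul_of_minimizing_support {ι : Type*} {S : Finset ι} {p q c : ι → ℝ}
    (hp : ∀ s ∈ S, 0 ≤ p s) (hp1 : ∑ s ∈ S, p s = 1) (hq : ∀ s ∈ S, 0 ≤ q s)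
    (hq1 : ∑ s ∈ S, q s = 1) (hmin : ∀ s ∈ S, 0 < p s → ∀ s' ∈ S, c s ≤ c s') :
    ∑ s ∈ S, p s * c s ≤ ∑ s ∈ S, q s * c s :=
  calc ∑ s ∈ S, p s * c s = ∑ s ∈ S, p s * ∑ s' ∈ S, q s' * c s := by
        simp_rw [← sum_mul, hq1, one_mul]
    _ ≤ ∑ s ∈ S, p s * ∑ s' ∈ S, q s' * c s' := by
        refine sum_le_sum fun s hs => ?_
        rcases (hp s hs).eq_or_lt with h0 | hpos
        · simp [← h0]
        · exact mul_le_mul_of_nonneg_left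
            (sum_le_sum fun s' hs' => mul_le_mul_of_nonneg_left (hmin s hs hpos s' hs') (hq s' hs'))
            hpos.le
    _ = ∑ s ∈ S, q s * c s := by rw [← sum_mul, hp1, one_mul]

lemma nonpos_of_isMaxOn_Icc {φ : ℝ → ℝ} {D b : ℝ} (hb : 0 < b) (hmax : IsMaxOn φ (Set.Icc 0 b) 0)
    (hφ : HasDerivAt φ D 0) : D ≤ 0 := by
  have hcone : b - 0 ∈ posTangentConeAt (Set.Icc 0 b) 0 :=
    sub_mem_posTangentConeAt_of_segment_subset (segment_eq_Icc hb.le).subset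
  have := hmax.localize.hasFDerivWithinAt_nonpos hφ.hasFDerivAt.hasFDerivWithinAt hcone
  rw [sub_zero, ContinuousLinearMap.toSpanSingleton_apply, smul_eq_mul] at this
  exact nonpos_of_mul_nonpos_right this hb

section Model

variable {T K w a d C Lexo P f}

lemma window_subset_Icc (hwin : ∀ k, 1 ≤ a k ∧ d k ≤ (T : ℤ)) {k : Fin K} {s : ℤ}
    (hs : s ∈ S K a d C k) : Icc s (s + (C k : ℤ) - 1) ⊆ Icc 1 (T : ℤ) := by
  intro t ht
  have := mem_Icc.1 hs
  have := mem_Icc.1 ht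
  have := hwin k
  exact mem_Icc.2 (by omega)

lemma config_eq_zero_of_notMem (hwin : ∀ k, 1 ≤ a k ∧ d k ≤ (T : ℤ)) {y : Fin K → ℤ → ℝ}
    (hy : ∀ k t, t ∉ S K a d C k → y k t = 0) {t : ℤ} (ht : t ∉ Icc 1 (T : ℤ)) :
    config K w C y t = 0 := by
  refine sum_eq_zero fun k _ => mul_eq_zero_of_right _ (sum_eq_zero fun t' ht' => hy k _ ?_)
  rw [mem_Icc] at ht ht'
  have := hwin k
  exact fun hs => ht (by have := mem_Icc.1 hs; omega)

lemma sum_mul_config (hwin : ∀ k, 1 ≤ a k ∧ d k ≤ (T : ℤ)) {y : Fin K → ℤ → ℝ}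
    (hy : ∀ k t, t ∉ S K a d C k → y k t = 0) (x : ℤ → ℝ) :
    ∑ t ∈ Icc 1 (T : ℤ), f (Lexo t + P * x t) * config K w C y t =
      ∑ k, w k * ∑ s ∈ S K a d C k, y k s * cost K C Lexo P f x k s := by
  simp only [config, mul_sum]
  rw [sum_comm]
  refine sum_congr rfl fun k _ => ?_
  simp_rw [mul_left_comm _ (w k), ← mul_sum]
  exact congrArg _ (sum_mul_sum_window _ _ (hy k) fun s hs => window_subset_Icc hwin hs)

lemma config_add_smul (y z : Fin K → ℤ → ℝ) (ε : ℝ) :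
    config K w C (y + ε • z) = config K w C y + ε • config K w C z := by
  ext t
  simp only [config, Pi.add_apply, Pi.smul_apply, smul_eq_mul, mul_add, sum_add_distrib, mul_sum,
    mul_left_comm ε]

lemma strictMono_comp_affine (hP : 0 < P) (hfm : StrictMono f) (L : ℝ) :
    StrictMono fun v => f (L + P * v) :=
  hfm.comp ((strictMono_mul_left_of_pos hP).const_add L)

lemma Phi_sub_Phi (hfc : Continuous f) (x x' : ℤ → ℝ) :
    Phi T Lexo P f x' - Phi T Lexo P f x =
      -∑ t ∈ Icc 1 (T : ℤ), ∫ v in x t..x' t, f (Lexo t + P * v) := by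
  rw [Phi, Phi, neg_sub_neg, ← sum_sub_distrib, ← sum_neg_distrib]
  refine sum_congr rfl fun t _ => ?_
  have hc : Continuous fun v => f (Lexo t + P * v) := by fun_prop
  rw [intervalIntegral.integral_interval_sub_left (hc.intervalIntegrable _ _)
    (hc.intervalIntegrable _ _), intervalIntegral.integral_symm]

lemma Phi_le_sub_sum_mul (hP : 0 < P) (hfc : Continuous f) (hfm : StrictMono f)
    (x x' : ℤ → ℝ) :
    Phi T Lexo P f x' ≤
      Phi T Lexo P f x - ∑ t ∈ Icc 1 (T : ℤ), f (Lexo t + P * x t) * (x' t - x t) := by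
  have := Phi_sub_Phi (T := T) (Lexo := Lexo) (P := P) hfc x x'
  have := sum_le_sum fun t (_ : t ∈ Icc 1 (T : ℤ)) =>
    mul_sub_le_integral_of_strictMono (by fun_prop) (strictMono_comp_affine hP hfm (Lexo t))
      (x t) (x' t)
  linarith

lemma Phi_lt_sub_sum_mul (hP : 0 < P) (hfc : Continuous f) (hfm : StrictMono f)
    {x x' : ℤ → ℝ} {t₀ : ℤ} (ht₀ : t₀ ∈ Icc 1 (T : ℤ)) (hne : x t₀ ≠ x' t₀) :
    Phi T Lexo P f x' <
      Phi T Lexo P f x - ∑ t ∈ Icc 1 (T : ℤ), f (Lexo t + P * x t) * (x' t - x t) := by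
  have hmono (t : ℤ) := strictMono_comp_affine hP hfm (Lexo t)
  have := Phi_sub_Phi (T := T) (Lexo := Lexo) (P := P) hfc x x'
  have := sum_lt_sum
    (fun t (_ : t ∈ Icc 1 (T : ℤ)) => mul_sub_le_integral_of_strictMono (by fun_prop) (hmono t)
      (x t) (x' t))
    ⟨t₀, ht₀, mul_sub_lt_integral_of_strictMono (by fun_prop) (hmono t₀) hne⟩
  linarith

lemma hasDerivAt_Phi_add_smul (hfc : Continuous f) (x δ : ℤ → ℝ) :
    HasDerivAt (fun ε : ℝ => Phi T Lexo P f (x + ε • δ))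
      (-∑ t ∈ Icc 1 (T : ℤ), f (Lexo t + P * x t) * δ t) 0 := by
  refine (HasDerivAt.fun_sum fun t _ => ?_).neg
  have hline : HasDerivAt (fun ε : ℝ => x t + ε * δ t) (δ t) 0 := by
    simpa using ((hasDerivAt_id (0 : ℝ)).mul_const (δ t)).const_add (x t)
  have hF := ((show Continuous fun v => f (Lexo t + P * v) by fun_prop).integral_hasStrictDerivAt
    0 (x t + 0 * δ t)).hasDerivAt.comp 0 hline
  simpa [Function.comp_def] using hF

noncomputable def massTransfer (k : Fin K) (s s' : ℤ) : Fin K → ℤ → ℝ :=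
  Pi.single k (Pi.single s' 1 - Pi.single s 1)

lemma massTransfer_eq_zero {k : Fin K} {s s' : ℤ} (hs : s ∈ S K a d C k)
    (hs' : s' ∈ S K a d C k) (k' : Fin K) (t : ℤ) (ht : t ∉ S K a d C k') :
    massTransfer k s s' k' t = 0 := by
  rcases eq_or_ne k' k with rfl | hk
  · simp [massTransfer, ne_of_mem_of_not_mem hs ht, ne_of_mem_of_not_mem hs' ht, eq_comm]
  · simp [massTransfer, hk]

lemma Feasible.add_smul_massTransfer {y : Fin K → ℤ → ℝ} (hy : Feasible K a d C y) {k : Fin K}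
    {s s' : ℤ} (hs : s ∈ S K a d C k) (hs' : s' ∈ S K a d C k) {ε : ℝ} (hε : 0 ≤ ε)
    (hεy : ε ≤ y k s) : Feasible K a d C (y + ε • massTransfer k s s') := by
  refine ⟨fun k' t => ?_, fun k' t ht => ?_, fun k' => ?_⟩
  · have := hy.1 k' t
    rcases eq_or_ne k' k with rfl | hk
    · simp only [massTransfer, Pi.add_apply, Pi.smul_apply, Pi.single_eq_same, Pi.sub_apply,
        Pi.single_apply, smul_eq_mul]
      split_ifs with h1 h2 <;> subst_vars <;> linarith
    · simp [massTransfer, hk, this]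
  · simp [hy.2.1 k' t ht, massTransfer_eq_zero hs hs' k' t ht]
  · rcases eq_or_ne k' k with rfl | hk
    · simp [massTransfer, sum_add_distrib, hy.2.2, hs, hs', ← mul_sum]
    · simp [massTransfer, hk, hy.2.2]

lemma sum_mul_config_massTransfer (hwin : ∀ k, 1 ≤ a k ∧ d k ≤ (T : ℤ)) {k : Fin K}
    {s s' : ℤ} (hs : s ∈ S K a d C k) (hs' : s' ∈ S K a d C k) (x : ℤ → ℝ) :
    ∑ t ∈ Icc 1 (T : ℤ), f (Lexo t + P * x t) * config K w C (massTransfer k s s') t =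
      w k * (cost K C Lexo P f x k s' - cost K C Lexo P f x k s) := by
  rw [sum_mul_config hwin (massTransfer_eq_zero hs hs') x, Fintype.sum_eq_single k]
  · simp [massTransfer, Pi.single_apply, sub_mul, sum_sub_distrib, hs, hs']
  · intro k' hk
    simp [massTransfer, hk]

lemma IsWardrop.sum_mul_sub_config_nonneg (hw : ∀ k, 0 ≤ w k)
    (hwin : ∀ k, 1 ≤ a k ∧ d k ≤ (T : ℤ)) {y y' : Fin K → ℤ → ℝ}
    (hW : IsWardrop K w a d C Lexo P f y) (hy : Feasible K a d C y)
    (hy' : Feasible K a d C y') :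
    0 ≤ ∑ t ∈ Icc 1 (T : ℤ), f (Lexo t + P * config K w C y t) *
      (config K w C y' t - config K w C y t) := by
  simp_rw [mul_sub, sum_sub_distrib, sub_nonneg, sum_mul_config hwin hy.2.1,
    sum_mul_config hwin hy'.2.1]
  exact sum_le_sum fun k _ => mul_le_mul_of_nonneg_left
    (sum_mul_le_sum_mul_of_minimizing_support (fun s _ => hy.1 k s) (hy.2.2 k)
      (fun s _ => hy'.1 k s) (hy'.2.2 k) (hW k)) (hw k)

lemma IsWardrop.Phi_le (hw : ∀ k, 0 ≤ w k) (hwin : ∀ k, 1 ≤ a k ∧ d k ≤ (T : ℤ))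
    (hP : 0 < P) (hfc : Continuous f) (hfm : StrictMono f) {y y' : Fin K → ℤ → ℝ}
    (hW : IsWardrop K w a d C Lexo P f y) (hy : Feasible K a d C y)
    (hy' : Feasible K a d C y') :
    Phi T Lexo P f (config K w C y') ≤ Phi T Lexo P f (config K w C y) :=
  (Phi_le_sub_sum_mul hP hfc hfm _ _).trans
    (sub_le_self _ (hW.sum_mul_sub_config_nonneg hw hwin hy hy'))

lemma IsWardrop.config_eq (hw : ∀ k, 0 ≤ w k) (hwin : ∀ k, 1 ≤ a k ∧ d k ≤ (T : ℤ))
    (hP : 0 < P) (hfc : Continuous f) (hfm : StrictMono f) {y y' : Fin K → ℤ → ℝ}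
    (hW : IsWardrop K w a d C Lexo P f y) (hy : Feasible K a d C y)
    (hy' : Feasible K a d C y')
    (hmax : Phi T Lexo P f (config K w C y) ≤ Phi T Lexo P f (config K w C y')) (t : ℤ) :
    config K w C y t = config K w C y' t := by
  by_cases ht : t ∈ Icc 1 (T : ℤ)
  · by_contra hne
    have := Phi_lt_sub_sum_mul (Lexo := Lexo) hP hfc hfm ht hne
    have := hW.sum_mul_sub_config_nonneg hw hwin hy hy'
    linarith
  · rw [config_eq_zero_of_notMem hwin hy.2.1 ht, config_eq_zero_of_notMem hwin hy'.2.1 ht]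

lemma isWardrop_of_forall_Phi_le (hw : ∀ k, 0 < w k) (hwin : ∀ k, 1 ≤ a k ∧ d k ≤ (T : ℤ))
    (hfc : Continuous f) {y : Fin K → ℤ → ℝ} (hy : Feasible K a d C y)
    (hmax : ∀ y', Feasible K a d C y' →
      Phi T Lexo P f (config K w C y') ≤ Phi T Lexo P f (config K w C y)) :
    IsWardrop K w a d C Lexo P f y := by
  intro k s hs hpos s' hs'
  have hline : IsMaxOn (fun ε : ℝ => Phi T Lexo P f
      (config K w C y + ε • config K w C (massTransfer k s s'))) (Set.Icc 0 (y k s)) 0 := by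
    intro ε hε
    simpa [← config_add_smul] using hmax _ (hy.add_smul_massTransfer hs hs' hε.1 hε.2)
  have hderiv := nonpos_of_isMaxOn_Icc hpos hline (hasDerivAt_Phi_add_smul hfc _ _)
  rw [neg_nonpos, sum_mul_config_massTransfer hwin hs hs'] at hderiv
  exact sub_nonneg.1 (nonneg_of_mul_nonneg_right hderiv (hw k))

lemma Feasible.mem_Icc {y : Fin K → ℤ → ℝ} (hy : Feasible K a d C y) (k : Fin K) (t : ℤ) :
    y k t ∈ Set.Icc 0 1 := by
  refine ⟨hy.1 k t, ?_⟩
  by_cases ht : t ∈ S K a d C k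
  · exact hy.2.2 k ▸ single_le_sum (fun t' _ => hy.1 k t') ht
  · simp [hy.2.1 k t ht]

lemma isCompact_setOf_feasible : IsCompact {y | Feasible K a d C y} := by
  have hev (k : Fin K) (t : ℤ) : Continuous fun y : Fin K → ℤ → ℝ => y k t := by fun_prop
  have hclosed : IsClosed {y | Feasible K a d C y} := by
    simp only [Feasible, Set.ofPred_and, Set.ofPred_forall]
    refine .inter (isClosed_iInter fun k => isClosed_iInter fun t => ?_) (.inter ?_ ?_)
    · exact isClosed_le continuous_const (hev k t)
    · exact isClosed_iInter fun k => isClosed_iInter fun t => isClosed_iInter fun _ =>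
        isClosed_eq (hev k t) continuous_const
    · exact isClosed_iInter fun k =>
        isClosed_eq (continuous_finsetSum _ fun t _ => hev k t) continuous_const
  exact (isCompact_univ_pi fun _ => isCompact_univ_pi fun _ => isCompact_Icc).of_isClosed_subset
    hclosed fun y hy k _ t _ => hy.mem_Icc k t

lemma continuous_Phi (hfc : Continuous f) : Continuous (Phi T Lexo P f) :=
  (continuous_finsetSum _ fun t _ => (intervalIntegral.continuous_primitive
    (fun _ _ => (by fun_prop : Continuous fun v => f (Lexo t + P * v)).intervalIntegrable _ _)
    0).comp (continuous_apply t)).neg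

lemma continuous_config : Continuous (config K w C) :=
  continuous_pi fun t => by unfold config; fun_prop

lemma exists_feasible_forall_Phi_le (hS : ∀ k, (S K a d C k).Nonempty) (hfc : Continuous f) :
    ∃ y, Feasible K a d C y ∧ ∀ y', Feasible K a d C y' →
      Phi T Lexo P f (config K w C y') ≤ Phi T Lexo P f (config K w C y) := by
  choose s hs using hS
  have hne : {y | Feasible K a d C y}.Nonempty := by
    refine ⟨fun k => Pi.single (s k) 1, fun k t => ?_, fun k t ht => ?_, fun k => ?_⟩
    · simp only [Pi.single_apply]; split_ifs <;> norm_num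
    · exact Pi.single_eq_of_ne (ne_of_mem_of_not_mem (hs k) ht).symm _
    · simp [hs k]
  obtain ⟨y, hy, hmax⟩ := isCompact_setOf_feasible.exists_isMaxOn hne
    ((continuous_Phi hfc).comp continuous_config).continuousOn
  exact ⟨y, hy, fun y' hy' => hmax hy'⟩

end Model

theorem nonatomic_unique_equilibrium
    (hw : ∀ k, 0 < w k)
    (hS : ∀ k, (S K a d C k).Nonempty)
    (hwin : ∀ k, 1 ≤ a k ∧ d k ≤ (T : ℤ))
    (hP : 0 < P) (hfc : Continuous f) (hfm : StrictMono f) :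
    (∀ y, Feasible K a d C y →
      (IsWardrop K w a d C Lexo P f y ↔
        ∀ y', Feasible K a d C y' →
          Phi T Lexo P f (config K w C y') ≤ Phi T Lexo P f (config K w C y))) ∧
    (∃ y, Feasible K a d C y ∧ IsWardrop K w a d C Lexo P f y) ∧
    (∀ y y', Feasible K a d C y → IsWardrop K w a d C Lexo P f y →
      Feasible K a d C y' → IsWardrop K w a d C Lexo P f y' →
      ∀ t, config K w C y t = config K w C y' t) := by
  have hw₀ (k : Fin K) : 0 ≤ w k := (hw k).le
  have hmax_iff (y : Fin K → ℤ → ℝ) (hy : Feasible K a d C y) :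
      IsWardrop K w a d C Lexo P f y ↔ ∀ y', Feasible K a d C y' →
        Phi T Lexo P f (config K w C y') ≤ Phi T Lexo P f (config K w C y) :=
    ⟨fun hW _ hy' => hW.Phi_le hw₀ hwin hP hfc hfm hy hy',
      isWardrop_of_forall_Phi_le hw hwin hfc hy⟩
  refine ⟨hmax_iff, ?_, ?_⟩
  · exact (exists_feasible_forall_Phi_le hS hfc).imp fun y ⟨hy, hmax⟩ =>
      ⟨hy, (hmax_iff y hy).2 hmax⟩
  · intro y y' hy hW hy' hW'
    exact hW.config_eq hw₀ hwin hP hfc hfm hy hy' (hW'.Phi_le hw₀ hwin hP hfc hfm hy' hy)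

end Stmt9
end

section
/- If the symmetric nonatomic equilibrium linear system has a unique solution that is moreover independent of the cost function, then the equilibrium is cost-function-invariant: under the assumptions that L^exo is convex increasing and 1 > q·L_{T-1}^exo - Σ_{k=1}^{q} L_{T-1-kC}^exo (where T - C + 1 = qC + r, 0 ≤ r < C), the unique Nash equilibrium of the symmetric nonatomic charging game is the same for every continuous strictly increasing f. -/
namespace Stmt11

/-- Induced charging configuration of a symmetric start-time distribution. -/
noncomputable def config (T C : ℕ) (xt : ℕ → ℝ) : ℕ → ℝ := fun t =>
  ∑ u ∈ Finset.Icc (max 1 (t + 1 - C)) (min t (T - C + 1)), xt u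

/-- The simplex of start-time distributions. -/
def InSimplex (T C : ℕ) (xt : ℕ → ℝ) : Prop :=
  (∀ t, 0 ≤ xt t) ∧ (∀ t, (t < 1 ∨ T - C + 1 < t) → xt t = 0) ∧
  (∑ t ∈ Finset.Icc 1 (T - C + 1), xt t = 1)

/-- Cost of start time `s`: `Σ_{t=s}^{s+C-1} f(L_t^exo + P·x_t)`. -/
noncomputable def cost (T C : ℕ) (Lexo : ℕ → ℝ) (P : ℝ) (f : ℝ → ℝ)
    (xt : ℕ → ℝ) (s : ℕ) : ℝ :=
  ∑ t ∈ Finset.Icc s (s + C - 1), f (Lexo t + P * config T C xt t)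

/-- Wardrop equilibrium of the symmetric nonatomic charging game with cost `f`. -/
def IsWardrop (T C : ℕ) (Lexo : ℕ → ℝ) (P : ℝ) (f : ℝ → ℝ) (xt : ℕ → ℝ) : Prop :=
  ∀ s ∈ Finset.Icc 1 (T - C + 1), 0 < xt s →
    ∀ s' ∈ Finset.Icc 1 (T - C + 1),
      cost T C Lexo P f xt s ≤ cost T C Lexo P f xt s'

/-! ### Auxiliary lemmas -/

lemma config_eq (T C : ℕ) (xt : ℕ → ℝ)
    (hzero : ∀ t, (t < 1 ∨ T - C + 1 < t) → xt t = 0) (t : ℕ) :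
    config T C xt t = ∑ u ∈ Finset.Icc (t + 1 - C) t, xt u := by
  unfold config
  apply Finset.sum_subset
  · intro u hu
    simp only [Finset.mem_Icc] at hu ⊢
    omega
  · intro u hu hnot
    apply hzero
    simp only [Finset.mem_Icc] at hu hnot
    omega

lemma config_succ (T C : ℕ) (xt : ℕ → ℝ)
    (hzero : ∀ t, (t < 1 ∨ T - C + 1 < t) → xt t = 0) (t : ℕ) :
    config T C xt (t + 1) = config T C xt t + xt (t + 1) - xt (t + 1 - C) := by
  rw [config_eq T C xt hzero, config_eq T C xt hzero]
  rcases le_or_gt C (t + 1) with h | h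
  · have h1 : t + 1 + 1 - C = (t + 1 - C) + 1 := by omega
    rw [h1]
    have e2 : ∑ u ∈ Finset.Icc (t + 1 - C) (t + 1), xt u
        = xt (t + 1 - C) + ∑ u ∈ Finset.Icc ((t + 1 - C) + 1) (t + 1), xt u := by
      rw [Finset.Icc_eq_cons_Ioc (by omega), Finset.sum_cons, ← Finset.Icc_add_one_left_eq_Ioc]
    have e1 := Finset.sum_Icc_succ_top (a := t + 1 - C) (b := t) (by omega) xt
    linarith
  · have h1 : t + 1 + 1 - C = 0 := by omega
    have h2 : t + 1 - C = 0 := by omega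
    rw [h1, h2]
    have hx0 : xt 0 = 0 := hzero 0 (by omega)
    rw [hx0]
    have e1 := Finset.sum_Icc_succ_top (a := 0) (b := t) (by omega) xt
    linarith

lemma sum_Icc_shift (F : ℕ → ℝ) (s C : ℕ) (hC : 1 ≤ C) :
    (∑ t ∈ Finset.Icc (s + 1) (s + 1 + C - 1), F t) + F s
      = (∑ t ∈ Finset.Icc s (s + C - 1), F t) + F (s + C) := by
  have h1 : s + 1 + C - 1 = s + C := by omega
  rw [h1]
  have e1 := Finset.sum_Icc_succ_top (a := s) (b := s + C - 1) (by omega) F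
  simp only [show s + C - 1 + 1 = s + C from by omega] at e1
  have e2 : ∑ t ∈ Finset.Icc s (s + C), F t
      = F s + ∑ t ∈ Finset.Icc (s + 1) (s + C), F t := by
    rw [Finset.Icc_eq_cons_Ioc (by omega), Finset.sum_cons, ← Finset.Icc_add_one_left_eq_Ioc]
  linarith

lemma cost_succ (T C : ℕ) (hC : 1 ≤ C) (Lexo : ℕ → ℝ) (P : ℝ) (f : ℝ → ℝ)
    (xt : ℕ → ℝ) (s : ℕ) :
    cost T C Lexo P f xt (s + 1) + f (Lexo s + P * config T C xt s)
      = cost T C Lexo P f xt s + f (Lexo (s + C) + P * config T C xt (s + C)) := by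
  unfold cost
  exact sum_Icc_shift (fun t => f (Lexo t + P * config T C xt t)) s C hC

lemma config_out (T C : ℕ) (hC : 1 ≤ C) (hCT : C ≤ T) (xt : ℕ → ℝ) (t : ℕ)
    (h : t < 1 ∨ T < t) : config T C xt t = 0 := by
  unfold config
  rw [Finset.Icc_eq_empty (by omega)]
  exact Finset.sum_empty

lemma sum_swap_window (T C : ℕ) (hC : 1 ≤ C) (hCT : C ≤ T) (w L : ℕ → ℝ) :
    ∑ s ∈ Finset.Icc 1 (T - C + 1), w s * ∑ t ∈ Finset.Icc s (s + C - 1), L t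
      = ∑ t ∈ Finset.Icc 1 T, config T C w t * L t := by
  unfold config
  have h1 : ∀ s ∈ Finset.Icc 1 (T - C + 1),
      w s * ∑ t ∈ Finset.Icc s (s + C - 1), L t
        = ∑ t ∈ Finset.Icc s (s + C - 1), w s * L t := by
    intro s _; rw [Finset.mul_sum]
  have h2 : ∀ t ∈ Finset.Icc 1 T,
      (∑ u ∈ Finset.Icc (max 1 (t + 1 - C)) (min t (T - C + 1)), w u) * L t
        = ∑ u ∈ Finset.Icc (max 1 (t + 1 - C)) (min t (T - C + 1)), w u * L t := by
    intro t _; rw [Finset.sum_mul]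
  rw [Finset.sum_congr rfl h1, Finset.sum_congr rfl h2, Finset.sum_sigma',
    Finset.sum_sigma']
  refine Finset.sum_nbij' (fun p => (⟨p.2, p.1⟩ : (_ : ℕ) × ℕ))
    (fun p => (⟨p.2, p.1⟩ : (_ : ℕ) × ℕ)) ?_ ?_ ?_ ?_ ?_
  · intro p hp
    simp only [Finset.mem_sigma, Finset.mem_Icc] at hp ⊢
    omega
  · intro p hp
    simp only [Finset.mem_sigma, Finset.mem_Icc] at hp ⊢
    omega
  · intro p _; rfl
  · intro p _; rfl
  · intro p _; rfl

lemma wardrop_id_of (T C : ℕ) (hC : 1 ≤ C) (Lexo : ℕ → ℝ) (P : ℝ) (hP : 0 < P)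
    (hLconv : ∀ t, Lexo (t + 1) - Lexo t ≤ Lexo (t + 2) - Lexo (t + 1))
    (f : ℝ → ℝ) (hf : StrictMono f) (xt : ℕ → ℝ)
    (hx : InSimplex T C xt) (hw : IsWardrop T C Lexo P f xt) :
    IsWardrop T C Lexo P id xt := by
  obtain ⟨hnn, hout, hsum⟩ := hx
  have Dmono : ∀ a b : ℕ, a ≤ b → Lexo (a + 1) - Lexo a ≤ Lexo (b + 1) - Lexo b := by
    intro a b hab
    induction b, hab using Nat.le_induction with
    | base => exact le_refl _
    | succ n hn ih =>
      have h := hLconv n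
      show Lexo (a + 1) - Lexo a ≤ Lexo (n + 2) - Lexo (n + 1)
      linarith
  have conv2 : ∀ u : ℕ, Lexo (u + C) - Lexo u ≤ Lexo (u + C + 1) - Lexo (u + 1) := by
    intro u
    have := Dmono u (u + C) (by omega)
    linarith
  have F1 : ∀ u : ℕ, xt (u + 1) = 0 →
      (Lexo (u + C) + P * config T C xt (u + C)) - (Lexo u + P * config T C xt u)
        ≤ (Lexo (u + C + 1) + P * config T C xt (u + C + 1))
          - (Lexo (u + 1) + P * config T C xt (u + 1)) := by
    intro u hxu
    have hy1 := config_succ T C xt hout u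
    have hy2 := config_succ T C xt hout (u + C)
    have hidx : u + C + 1 - C = u + 1 := by omega
    rw [hidx] at hy2
    have m1 : P * config T C xt (u + 1) = P * config T C xt u - P * xt (u + 1 - C) := by
      rw [hy1, hxu]; ring
    have m2 : P * config T C xt (u + C + 1)
        = P * config T C xt (u + C) + P * xt (u + C + 1) := by
      rw [hy2, hxu]; ring
    have n1 : 0 ≤ P * xt (u + C + 1) := mul_nonneg hP.le (hnn _)
    have n2 : 0 ≤ P * xt (u + 1 - C) := mul_nonneg hP.le (hnn _)
    have := conv2 u
    linarith
  have F2a : ∀ s : ℕ, 1 ≤ s → s + 1 ≤ T - C + 1 → 0 < xt s →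
      Lexo s + P * config T C xt s ≤ Lexo (s + C) + P * config T C xt (s + C) := by
    intro s h1 h2 hpos
    have hmem : s ∈ Finset.Icc 1 (T - C + 1) := Finset.mem_Icc.mpr ⟨h1, by omega⟩
    have hmem' : s + 1 ∈ Finset.Icc 1 (T - C + 1) := Finset.mem_Icc.mpr ⟨by omega, h2⟩
    have hle := hw s hmem hpos (s + 1) hmem'
    have heq := cost_succ T C hC Lexo P f xt s
    have hfle : f (Lexo s + P * config T C xt s)
        ≤ f (Lexo (s + C) + P * config T C xt (s + C)) := by linarith
    exact hf.le_iff_le.mp hfle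
  have F2b : ∀ u : ℕ, 1 ≤ u → u + 1 ≤ T - C + 1 → 0 < xt (u + 1) →
      Lexo (u + C) + P * config T C xt (u + C) ≤ Lexo u + P * config T C xt u := by
    intro u h1 h2 hpos
    have hmem : u + 1 ∈ Finset.Icc 1 (T - C + 1) := Finset.mem_Icc.mpr ⟨by omega, h2⟩
    have hmem' : u ∈ Finset.Icc 1 (T - C + 1) := Finset.mem_Icc.mpr ⟨h1, by omega⟩
    have hle := hw (u + 1) hmem hpos u hmem'
    have heq := cost_succ T C hC Lexo P f xt u
    have hfle : f (Lexo (u + C) + P * config T C xt (u + C))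
        ≤ f (Lexo u + P * config T C xt u) := by linarith
    exact hf.le_iff_le.mp hfle
  have P2 : ∀ s : ℕ, 1 ≤ s → 0 < xt s → ∀ u, s ≤ u → u + 1 ≤ T - C + 1 →
      Lexo u + P * config T C xt u ≤ Lexo (u + C) + P * config T C xt (u + C) := by
    intro s h1 hpos u hsu
    induction u, hsu using Nat.le_induction with
    | base => intro h; exact F2a s h1 h hpos
    | succ u hsu ih =>
      intro h
      rcases (hnn (u + 1)).lt_or_eq with hpos' | hzero'
      · exact F2a (u + 1) (by omega) h hpos'
      · have hF := F1 u hzero'.symm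
        have hih := ih (by omega)
        rw [show u + 1 + C = u + C + 1 from by omega]
        linarith
  have P1 : ∀ s : ℕ, s ≤ T - C + 1 → 0 < xt s → ∀ k u, 1 ≤ u → u + k + 1 = s →
      Lexo (u + C) + P * config T C xt (u + C) ≤ Lexo u + P * config T C xt u := by
    intro s hsN hpos k
    induction k with
    | zero =>
      intro u h1 h2
      have hx' : 0 < xt (u + 1) := by
        rw [show u + 1 = s from by omega]; exact hpos
      exact F2b u h1 (by omega) hx'
    | succ k ih =>
      intro u h1 h2
      rcases (hnn (u + 1)).lt_or_eq with hpos' | hzero'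
      · exact F2b u h1 (by omega) hpos'
      · have hF := F1 u hzero'.symm
        have hih := ih (u + 1) (by omega) (by omega)
        rw [show u + 1 + C = u + C + 1 from by omega] at hih
        linarith
  intro s hs hpos s' hs'
  rw [Finset.mem_Icc] at hs hs'
  have costrel : ∀ v : ℕ, cost T C Lexo P id xt (v + 1) + (Lexo v + P * config T C xt v)
      = cost T C Lexo P id xt v + (Lexo (v + C) + P * config T C xt (v + C)) := by
    intro v
    have := cost_succ T C hC Lexo P id xt v
    simpa using this
  rcases le_total s s' with hss' | hss'
  · have chain : ∀ v, s ≤ v → v ≤ T - C + 1 →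
        cost T C Lexo P id xt s ≤ cost T C Lexo P id xt v := by
      intro v hv
      induction v, hv using Nat.le_induction with
      | base => intro _; exact le_refl _
      | succ v hv ih =>
        intro hvN
        have h1 := ih (by omega)
        have h2 := P2 s hs.1 hpos v hv (by omega)
        have h3 := costrel v
        linarith
    exact chain s' hss' hs'.2
  · have chain2 : ∀ k v, v + k = s → s' ≤ v →
        cost T C Lexo P id xt s ≤ cost T C Lexo P id xt v := by
      intro k
      induction k with
      | zero =>
        intro v hv _
        rw [show v = s from by omega]
      | succ k ih =>
        intro v hv hv1
        have h1 := ih (v + 1) (by omega) (by omega)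
        have h2 := P1 s hs.2 hpos k v (by omega) (by omega)
        have h3 := costrel v
        linarith
    exact chain2 (s - s') s' (by omega) (le_refl _)

lemma config_unique (T C : ℕ) (hC : 1 ≤ C) (hCT : C ≤ T) (Lexo : ℕ → ℝ) (P : ℝ)
    (hP : 0 < P) (xt₁ xt₂ : ℕ → ℝ)
    (h₁ : InSimplex T C xt₁) (h₂ : InSimplex T C xt₂)
    (hw₁ : IsWardrop T C Lexo P id xt₁) (hw₂ : IsWardrop T C Lexo P id xt₂) :
    ∀ t, config T C xt₁ t = config T C xt₂ t := by
  have costid : ∀ (x : ℕ → ℝ) (s : ℕ), cost T C Lexo P id x s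
      = ∑ t ∈ Finset.Icc s (s + C - 1), (Lexo t + P * config T C x t) := by
    intro x s; unfold cost; simp only [id_eq]
  have key : ∀ (a b : ℕ → ℝ), InSimplex T C a → InSimplex T C b →
      IsWardrop T C Lexo P id a →
      ∑ t ∈ Finset.Icc 1 T, config T C a t * (Lexo t + P * config T C a t)
        ≤ ∑ t ∈ Finset.Icc 1 T, config T C b t * (Lexo t + P * config T C a t) := by
    intro a b ha hb hwa
    have hA : ∀ s' ∈ Finset.Icc 1 (T - C + 1),
        (∑ s ∈ Finset.Icc 1 (T - C + 1),
          a s * ∑ t ∈ Finset.Icc s (s + C - 1), (Lexo t + P * config T C a t))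
          ≤ ∑ t ∈ Finset.Icc s' (s' + C - 1), (Lexo t + P * config T C a t) := by
      intro s' hs'
      have step : ∀ s ∈ Finset.Icc 1 (T - C + 1),
          a s * ∑ t ∈ Finset.Icc s (s + C - 1), (Lexo t + P * config T C a t)
            ≤ a s * ∑ t ∈ Finset.Icc s' (s' + C - 1), (Lexo t + P * config T C a t) := by
        intro s hs
        rcases (ha.1 s).lt_or_eq with hpos | hzero
        · have hcc := hwa s hs hpos s' hs'
          rw [costid, costid] at hcc
          exact mul_le_mul_of_nonneg_left hcc hpos.le
        · rw [← hzero]; simp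
      calc ∑ s ∈ Finset.Icc 1 (T - C + 1),
            a s * ∑ t ∈ Finset.Icc s (s + C - 1), (Lexo t + P * config T C a t)
          ≤ ∑ s ∈ Finset.Icc 1 (T - C + 1),
            a s * ∑ t ∈ Finset.Icc s' (s' + C - 1), (Lexo t + P * config T C a t) :=
            Finset.sum_le_sum step
        _ = (∑ s ∈ Finset.Icc 1 (T - C + 1), a s)
            * ∑ t ∈ Finset.Icc s' (s' + C - 1), (Lexo t + P * config T C a t) := by
            rw [Finset.sum_mul]
        _ = ∑ t ∈ Finset.Icc s' (s' + C - 1), (Lexo t + P * config T C a t) := by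
            rw [ha.2.2, one_mul]
    have main : (∑ s ∈ Finset.Icc 1 (T - C + 1),
        a s * ∑ t ∈ Finset.Icc s (s + C - 1), (Lexo t + P * config T C a t))
        ≤ ∑ s ∈ Finset.Icc 1 (T - C + 1),
          b s * ∑ t ∈ Finset.Icc s (s + C - 1), (Lexo t + P * config T C a t) := by
      calc (∑ s ∈ Finset.Icc 1 (T - C + 1),
            a s * ∑ t ∈ Finset.Icc s (s + C - 1), (Lexo t + P * config T C a t))
          = (∑ s' ∈ Finset.Icc 1 (T - C + 1), b s')
            * (∑ s ∈ Finset.Icc 1 (T - C + 1),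
              a s * ∑ t ∈ Finset.Icc s (s + C - 1), (Lexo t + P * config T C a t)) := by
            rw [hb.2.2, one_mul]
        _ = ∑ s' ∈ Finset.Icc 1 (T - C + 1),
            b s' * (∑ s ∈ Finset.Icc 1 (T - C + 1),
              a s * ∑ t ∈ Finset.Icc s (s + C - 1), (Lexo t + P * config T C a t)) := by
            rw [Finset.sum_mul]
        _ ≤ ∑ s' ∈ Finset.Icc 1 (T - C + 1),
            b s' * ∑ t ∈ Finset.Icc s' (s' + C - 1), (Lexo t + P * config T C a t) :=
            Finset.sum_le_sum (fun s' hs' =>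
              mul_le_mul_of_nonneg_left (hA s' hs') (hb.1 s'))
    rw [sum_swap_window T C hC hCT a (fun t => Lexo t + P * config T C a t),
      sum_swap_window T C hC hCT b (fun t => Lexo t + P * config T C a t)] at main
    exact main
  have K1 := key xt₁ xt₂ h₁ h₂ hw₁
  have K2 := key xt₂ xt₁ h₂ h₁ hw₂
  have expand : ∀ t ∈ Finset.Icc 1 T,
      -(P * (config T C xt₁ t - config T C xt₂ t) ^ 2)
        = (config T C xt₂ t * (Lexo t + P * config T C xt₁ t)
            - config T C xt₁ t * (Lexo t + P * config T C xt₁ t))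
          + (config T C xt₁ t * (Lexo t + P * config T C xt₂ t)
            - config T C xt₂ t * (Lexo t + P * config T C xt₂ t)) := by
    intro t _; ring
  have esum : ∑ t ∈ Finset.Icc 1 T, -(P * (config T C xt₁ t - config T C xt₂ t) ^ 2) ≥ 0 := by
    rw [Finset.sum_congr rfl expand, Finset.sum_add_distrib,
      Finset.sum_sub_distrib, Finset.sum_sub_distrib]
    linarith
  have esum2 : ∑ t ∈ Finset.Icc 1 T, P * (config T C xt₁ t - config T C xt₂ t) ^ 2 ≤ 0 := by
    have hneg : ∑ t ∈ Finset.Icc 1 T, -(P * (config T C xt₁ t - config T C xt₂ t) ^ 2)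
        = -∑ t ∈ Finset.Icc 1 T, P * (config T C xt₁ t - config T C xt₂ t) ^ 2 := by
      rw [Finset.sum_neg_distrib]
    linarith
  have nn : 0 ≤ ∑ t ∈ Finset.Icc 1 T, (config T C xt₁ t - config T C xt₂ t) ^ 2 :=
    Finset.sum_nonneg (fun t _ => sq_nonneg _)
  have smul : P * ∑ t ∈ Finset.Icc 1 T, (config T C xt₁ t - config T C xt₂ t) ^ 2 ≤ 0 := by
    rw [Finset.mul_sum]; exact esum2
  have stot : ∑ t ∈ Finset.Icc 1 T, (config T C xt₁ t - config T C xt₂ t) ^ 2 = 0 := by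
    have hS : ∑ t ∈ Finset.Icc 1 T, (config T C xt₁ t - config T C xt₂ t) ^ 2 ≤ 0 := by
      by_contra h
      push_neg at h
      nlinarith
    exact le_antisymm hS nn
  have sq0 := (Finset.sum_eq_zero_iff_of_nonneg (fun t _ => sq_nonneg _)).mp stot
  intro t
  by_cases ht : t ∈ Finset.Icc 1 T
  · have h0 := sq0 t ht
    have h1 : config T C xt₁ t - config T C xt₂ t = 0 :=
      (pow_eq_zero_iff two_ne_zero).mp h0
    linarith
  · rw [Finset.mem_Icc] at ht
    rw [config_out T C hC hCT xt₁ t (by omega), config_out T C hC hCT xt₂ t (by omega)]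

/-- if `L^exo` is convex and increasing and
`1 > q·L_{T-1}^exo - Σ_{k=1}^{q} L_{T-1-kC}^exo` (where `T-C+1 = qC + r`, `r < C`),
then the unique Nash equilibrium of the symmetric nonatomic charging game is the same
for every continuous strictly increasing cost function. -/
theorem symmetric_equilibrium_cost_invariant
    (T C q r : ℕ) (hC : 1 ≤ C) (hCT : C ≤ T)
    (hdiv : T - C + 1 = q * C + r) (hr : r < C)
    (Lexo : ℕ → ℝ) (P : ℝ) (hP : 0 < P)
    (hLinc : ∀ t, Lexo t ≤ Lexo (t + 1))
    (hLconv : ∀ t, Lexo (t + 1) - Lexo t ≤ Lexo (t + 2) - Lexo (t + 1))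
    (hcond : (1 : ℝ) > q * Lexo (T - 1) - ∑ k ∈ Finset.Icc 1 q, Lexo (T - 1 - k * C)) :
    ∀ f₁ f₂ : ℝ → ℝ, Continuous f₁ → StrictMono f₁ → Continuous f₂ → StrictMono f₂ →
      ∀ xt₁ xt₂ : ℕ → ℝ,
        InSimplex T C xt₁ → IsWardrop T C Lexo P f₁ xt₁ →
        InSimplex T C xt₂ → IsWardrop T C Lexo P f₂ xt₂ →
        ∀ t, config T C xt₁ t = config T C xt₂ t := by
  intro f₁ f₂ _ hm₁ _ hm₂ xt₁ xt₂ hS₁ hW₁ hS₂ hW₂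
  exact config_unique T C hC hCT Lexo P hP xt₁ xt₂ hS₁ hS₂
    (wardrop_id_of T C hC Lexo P hP hLconv f₁ hm₁ xt₁ hS₁ hW₁)
    (wardrop_id_of T C hC Lexo P hP hLconv f₂ hm₂ xt₂ hS₂ hW₂)

end Stmt11
end
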